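/- For each integer k with 0 ≤ k ≤ m, the assignments λ_k(a_i)=1, λ_k(b_j)=1, λ_k(c_j)=0, λ_k(d_k)=1, λ_k(e_l)=2, λ_k(f_i)=1 for i≤k and λ_k(f_i)=0 for i>k, and λ_k(g_q)=2 define a group homomorphism λ_k : G → ℤ/4ℤ whose restriction to each finite cyclic subgroup ⟨b_j⟩, ⟨d_k⟩, ⟨e_l⟩, ⟨g_q⟩ is injective; moreover λ_k is surjective if and only if r+s+t+k > 0. -/

import Mathlib

/-!
`λ_k` is defined factor by factor through the universal property of the free product. Each of
the torsion generators `b_j, d_k, e_l, g_q` is sent to an element of `ℤ/4` of the same order, so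
`λ_k` is injective on the cyclic subgroup it generates. A generator sent to `1` makes `λ_k`
surjective; when `r = s = t = k = 0` there is none, and every factor maps into the proper subgroup
`2ℤ/4ℤ`, the image of `ℤ/2`.
-/

open Monoid

/-- Index type for the factors of the free product `G(r,s,t,m,n)`. -/
abbrev Idx (r s t m n : ℕ) := Fin r ⊕ Fin s ⊕ Fin t ⊕ Fin m ⊕ Fin n

/-- The factors: `r` copies of `ℤ`, `s` copies of `ℤ/4 × ℤ`, `t` copies of `ℤ/4`,
`m` copies of `ℤ/2 × ℤ`, and `n` copies of `ℤ/2` (written multiplicatively). -/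
def Fac (r s t m n : ℕ) : Idx r s t m n → Type
  | .inl _ => Multiplicative ℤ
  | .inr (.inl _) => Multiplicative (ZMod 4 × ℤ)
  | .inr (.inr (.inl _)) => Multiplicative (ZMod 4)
  | .inr (.inr (.inr (.inl _))) => Multiplicative (ZMod 2 × ℤ)
  | .inr (.inr (.inr (.inr _))) => Multiplicative (ZMod 2)

instance (r s t m n : ℕ) : (i : Idx r s t m n) → Group (Fac r s t m n i)
  | .inl _ => inferInstanceAs (Group (Multiplicative ℤ))
  | .inr (.inl _) => inferInstanceAs (Group (Multiplicative (ZMod 4 × ℤ)))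
  | .inr (.inr (.inl _)) => inferInstanceAs (Group (Multiplicative (ZMod 4)))
  | .inr (.inr (.inr (.inl _))) => inferInstanceAs (Group (Multiplicative (ZMod 2 × ℤ)))
  | .inr (.inr (.inr (.inr _))) => inferInstanceAs (Group (Multiplicative (ZMod 2)))

/-- The group `G(r,s,t,m,n)`, the free product of the factors above; this is the orbifold
fundamental group `π₁^orb(V(Γ(v),G(v)))`. -/
abbrev OrbGroup (r s t m n : ℕ) := Monoid.CoprodI (Fac r s t m n)

variable {r s t m n : ℕ}

/-- The free generator `a_i` of the `i`-th `ℤ` factor. -/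
def genA (i : Fin r) : OrbGroup r s t m n :=
  CoprodI.of (show Fac r s t m n (.inl i) from Multiplicative.ofAdd (1 : ℤ))

/-- The order-4 generator `b_j` of the `j`-th `ℤ/4 × ℤ` factor. -/
def genB (j : Fin s) : OrbGroup r s t m n :=
  CoprodI.of (show Fac r s t m n (.inr (.inl j)) from
    Multiplicative.ofAdd ((1, 0) : ZMod 4 × ℤ))

/-- The infinite-order generator `c_j` of the `j`-th `ℤ/4 × ℤ` factor. -/
def genC (j : Fin s) : OrbGroup r s t m n :=
  CoprodI.of (show Fac r s t m n (.inr (.inl j)) from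
    Multiplicative.ofAdd ((0, 1) : ZMod 4 × ℤ))

/-- The order-4 generator `d_k` of the `k`-th `ℤ/4` factor. -/
def genD (k : Fin t) : OrbGroup r s t m n :=
  CoprodI.of (show Fac r s t m n (.inr (.inr (.inl k))) from
    Multiplicative.ofAdd (1 : ZMod 4))

/-- The order-2 generator `e_l` of the `l`-th `ℤ/2 × ℤ` factor. -/
def genE (l : Fin m) : OrbGroup r s t m n :=
  CoprodI.of (show Fac r s t m n (.inr (.inr (.inr (.inl l)))) from
    Multiplicative.ofAdd ((1, 0) : ZMod 2 × ℤ))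

/-- The infinite-order generator `f_l` of the `l`-th `ℤ/2 × ℤ` factor. -/
def genF (l : Fin m) : OrbGroup r s t m n :=
  CoprodI.of (show Fac r s t m n (.inr (.inr (.inr (.inl l)))) from
    Multiplicative.ofAdd ((0, 1) : ZMod 2 × ℤ))

/-- The order-2 generator `g_q` of the `q`-th `ℤ/2` factor. -/
def genG (q : Fin n) : OrbGroup r s t m n :=
  CoprodI.of (show Fac r s t m n (.inr (.inr (.inr (.inr q)))) from
    Multiplicative.ofAdd (1 : ZMod 2))

/-- An automorphism of `G(r,s,t,m,n)` is admissible (the algebraic characterization of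
realizable automorphisms from Lemma 2.2) if it sends each torsion-related generator to a
conjugate of the appropriate normal form. -/
def Admissible (α : OrbGroup r s t m n ≃* OrbGroup r s t m n) : Prop :=
  ∃ (σ : Equiv.Perm (Fin s)) (τ : Equiv.Perm (Fin t)) (γ : Equiv.Perm (Fin m))
    (ξ : Equiv.Perm (Fin n))
    (x : Fin s → OrbGroup r s t m n) (y : Fin t → OrbGroup r s t m n)
    (u : Fin m → OrbGroup r s t m n) (z : Fin n → OrbGroup r s t m n)
    (ε : Fin s → ℤ) (δ : Fin t → ℤ) (ε' : Fin m → ℤ) (δ' : Fin n → ℤ)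
    (v : Fin s → ℕ) (w : Fin m → ℕ),
    (∀ j, ε j = 1 ∨ ε j = -1) ∧ (∀ k, δ k = 1 ∨ δ k = -1) ∧
    (∀ l, ε' l = 1 ∨ ε' l = -1) ∧ (∀ q, δ' q = 1 ∨ δ' q = -1) ∧
    (∀ j, v j < 4) ∧ (∀ l, w l < 2) ∧
    (∀ j, α (genB j) = x j * genB (σ j) ^ ε j * (x j)⁻¹) ∧
    (∀ j, α (genC j) = x j * genB (σ j) ^ v j * genC (σ j) ^ ε j * (x j)⁻¹) ∧
    (∀ k, α (genD k) = y k * genD (τ k) ^ δ k * (y k)⁻¹) ∧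
    (∀ l, α (genE l) = u l * genE (γ l) ^ ε' l * (u l)⁻¹) ∧
    (∀ l, α (genF l) = u l * genE (γ l) ^ w l * genF (γ l) ^ ε' l * (u l)⁻¹) ∧
    (∀ q, α (genG q) = z q * genG (ξ q) ^ δ' q * (z q)⁻¹)

/-- `λ` is "finite injective": its restriction to each finite cyclic subgroup
`⟨b_j⟩`, `⟨d_k⟩`, `⟨e_l⟩`, `⟨g_q⟩` is injective. -/
def InjOnTorsion {r s t m n : ℕ}
    (lam : OrbGroup r s t m n →* Multiplicative (ZMod 4)) : Prop :=
  (∀ j : Fin s, Set.InjOn lam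
    ((Subgroup.zpowers (genB j) : Subgroup (OrbGroup r s t m n)) : Set (OrbGroup r s t m n))) ∧
  (∀ k : Fin t, Set.InjOn lam
    ((Subgroup.zpowers (genD k) : Subgroup (OrbGroup r s t m n)) : Set (OrbGroup r s t m n))) ∧
  (∀ l : Fin m, Set.InjOn lam
    ((Subgroup.zpowers (genE l) : Subgroup (OrbGroup r s t m n)) : Set (OrbGroup r s t m n))) ∧
  (∀ q : Fin n, Set.InjOn lam
    ((Subgroup.zpowers (genG q) : Subgroup (OrbGroup r s t m n)) : Set (OrbGroup r s t m n)))

/-- `λ` takes the normalized values of Lemma 2.4 with parameter `k`: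
`λ(a_i) = λ(b_j) = λ(d_k) = 1`, `λ(c_j) = 0`, `λ(e_l) = λ(g_q) = 2`, and `λ(f_i) = 1`
for the first `k` indices `i`, `λ(f_i) = 0` for the remaining ones. -/
def IsNormalized {r s t m n : ℕ} (k : ℕ)
    (lam : OrbGroup r s t m n →* Multiplicative (ZMod 4)) : Prop :=
  (∀ i : Fin r, lam (genA i) = Multiplicative.ofAdd (1 : ZMod 4)) ∧
  (∀ j : Fin s, lam (genB j) = Multiplicative.ofAdd (1 : ZMod 4)) ∧
  (∀ j : Fin s, lam (genC j) = Multiplicative.ofAdd (0 : ZMod 4)) ∧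
  (∀ k' : Fin t, lam (genD k') = Multiplicative.ofAdd (1 : ZMod 4)) ∧
  (∀ l : Fin m, lam (genE l) = Multiplicative.ofAdd (2 : ZMod 4)) ∧
  (∀ i : Fin m, ((i : ℕ) < k → lam (genF i) = Multiplicative.ofAdd (1 : ZMod 4)) ∧
    (k ≤ (i : ℕ) → lam (genF i) = Multiplicative.ofAdd (0 : ZMod 4))) ∧
  (∀ q : Fin n, lam (genG q) = Multiplicative.ofAdd (2 : ZMod 4))

theorem MonoidHom.injOn_zpowers_of_orderOf_dvd {G H : Type*} [Group G] [Group H] (f : G →* H)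
    {g : G} (h : orderOf g ∣ orderOf (f g)) : Set.InjOn f (Subgroup.zpowers g : Set G) := by
  rintro _ ⟨a, rfl⟩ _ ⟨b, rfl⟩ hab
  have hf : f g ^ (a - b) = 1 := by
    simp only [zpow_sub, ← map_zpow, hab, mul_inv_cancel]
  have hg : g ^ (a - b) = 1 :=
    orderOf_dvd_iff_zpow_eq_one.mp ((Int.natCast_dvd_natCast.mpr h).trans
      (orderOf_dvd_iff_zpow_eq_one.mpr hf))
  simpa [zpow_sub, mul_inv_eq_one] using hg

theorem MonoidHom.surjective_of_map_eq_ofAdd_one {G : Type*} [Group G] {n : ℕ}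
    (f : G →* Multiplicative (ZMod n)) {g : G} (hg : f g = Multiplicative.ofAdd 1) :
    Function.Surjective f := by
  intro y
  obtain ⟨a, ha⟩ := ZMod.intCast_surjective (Multiplicative.toAdd y)
  exact ⟨g ^ a, by rw [map_zpow, hg, ← ofAdd_zsmul, zsmul_one, ha, ofAdd_toAdd]⟩

theorem ZMod.orderOf_ofAdd_one (n : ℕ) :
    orderOf (Multiplicative.ofAdd (1 : ZMod n)) = n := by
  rw [orderOf_ofAdd_eq_addOrderOf, ZMod.addOrderOf_one]

theorem orderOf_ofAdd_two_zmod_four : orderOf (Multiplicative.ofAdd (2 : ZMod 4)) = 2 :=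
  orderOf_eq_prime (by decide) (by decide)

def doubleZMod : ZMod 2 →+ ZMod 4 :=
  ZMod.lift 2 ⟨zmultiplesHom (ZMod 4) 2, by decide⟩

def normalizedFactor (k : ℕ) : ∀ i : Idx r s t m n, Fac r s t m n i →* Multiplicative (ZMod 4)
  | .inl _ => show Multiplicative ℤ →* _ from
      AddMonoidHom.toMultiplicative (Int.castAddHom (ZMod 4))
  | .inr (.inl _) => show Multiplicative (ZMod 4 × ℤ) →* _ from
      AddMonoidHom.toMultiplicative (AddMonoidHom.fst (ZMod 4) ℤ)
  | .inr (.inr (.inl _)) => show Multiplicative (ZMod 4) →* _ from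
      AddMonoidHom.toMultiplicative (AddMonoidHom.id (ZMod 4))
  | .inr (.inr (.inr (.inl l))) => show Multiplicative (ZMod 2 × ℤ) →* _ from
      AddMonoidHom.toMultiplicative (doubleZMod.comp (AddMonoidHom.fst (ZMod 2) ℤ) +
        (if (l : ℕ) < k then Int.castAddHom (ZMod 4) else 0).comp (AddMonoidHom.snd (ZMod 2) ℤ))
  | .inr (.inr (.inr (.inr _))) => show Multiplicative (ZMod 2) →* _ from
      AddMonoidHom.toMultiplicative doubleZMod

def normalizedHom (r s t m n k : ℕ) : OrbGroup r s t m n →* Multiplicative (ZMod 4) :=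
  CoprodI.lift (normalizedFactor k)

theorem orderOf_genB_dvd (j : Fin s) : orderOf (genB j : OrbGroup r s t m n) ∣ 4 :=
  (orderOf_map_dvd CoprodI.of _).trans
    (orderOf_dvd_of_pow_eq_one (x := Multiplicative.ofAdd ((1, 0) : ZMod 4 × ℤ)) (by decide))

theorem orderOf_genD_dvd (i : Fin t) : orderOf (genD i : OrbGroup r s t m n) ∣ 4 :=
  (orderOf_map_dvd CoprodI.of _).trans
    (orderOf_dvd_of_pow_eq_one (x := Multiplicative.ofAdd (1 : ZMod 4)) (by decide))

theorem orderOf_genE_dvd (l : Fin m) : orderOf (genE l : OrbGroup r s t m n) ∣ 2 :=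
  (orderOf_map_dvd CoprodI.of _).trans
    (orderOf_dvd_of_pow_eq_one (x := Multiplicative.ofAdd ((1, 0) : ZMod 2 × ℤ)) (by decide))

theorem orderOf_genG_dvd (q : Fin n) : orderOf (genG q : OrbGroup r s t m n) ∣ 2 :=
  (orderOf_map_dvd CoprodI.of _).trans
    (orderOf_dvd_of_pow_eq_one (x := Multiplicative.ofAdd (1 : ZMod 2)) (by decide))

section normalizedHom

variable (k : ℕ)

theorem normalizedHom_genA (i : Fin r) :
    normalizedHom r s t m n k (genA i) = Multiplicative.ofAdd 1 := rfl

theorem normalizedHom_genB (j : Fin s) :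
    normalizedHom r s t m n k (genB j) = Multiplicative.ofAdd 1 := rfl

theorem normalizedHom_genC (j : Fin s) :
    normalizedHom r s t m n k (genC j) = Multiplicative.ofAdd 0 := rfl

theorem normalizedHom_genD (i : Fin t) :
    normalizedHom r s t m n k (genD i) = Multiplicative.ofAdd 1 := rfl

theorem normalizedHom_genE (l : Fin m) :
    normalizedHom r s t m n k (genE l) = Multiplicative.ofAdd 2 := by
  rw [normalizedHom, genE, CoprodI.lift_of]
  by_cases h : (l : ℕ) < k <;> simp only [normalizedFactor, h, if_true, if_false] <;> rfl

theorem normalizedHom_genF (l : Fin m) :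
    normalizedHom r s t m n k (genF l) =
      Multiplicative.ofAdd (if (l : ℕ) < k then 1 else 0) := by
  rw [normalizedHom, genF, CoprodI.lift_of]
  by_cases h : (l : ℕ) < k <;> simp only [normalizedFactor, h, if_true, if_false] <;> rfl

theorem normalizedHom_genG (q : Fin n) :
    normalizedHom r s t m n k (genG q) = Multiplicative.ofAdd 2 := rfl

theorem injOnTorsion_normalizedHom :
    InjOnTorsion (normalizedHom r s t m n k) := by
  refine ⟨fun j ↦ ?_, fun i ↦ ?_, fun l ↦ ?_, fun q ↦ ?_⟩ <;>
    refine MonoidHom.injOn_zpowers_of_orderOf_dvd _ ?_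
  · rw [normalizedHom_genB, ZMod.orderOf_ofAdd_one]; exact orderOf_genB_dvd j
  · rw [normalizedHom_genD, ZMod.orderOf_ofAdd_one]; exact orderOf_genD_dvd i
  · rw [normalizedHom_genE, orderOf_ofAdd_two_zmod_four]; exact orderOf_genE_dvd l
  · rw [normalizedHom_genG, orderOf_ofAdd_two_zmod_four]; exact orderOf_genG_dvd q

theorem surjective_normalizedHom (hk : k ≤ m) (h : 0 < r + s + t + k) :
    Function.Surjective (normalizedHom r s t m n k) := by
  obtain hr | hs | ht | hk0 : 0 < r ∨ 0 < s ∨ 0 < t ∨ 0 < k := by omega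
  · exact MonoidHom.surjective_of_map_eq_ofAdd_one _ (normalizedHom_genA k ⟨0, hr⟩)
  · exact MonoidHom.surjective_of_map_eq_ofAdd_one _ (normalizedHom_genB k ⟨0, hs⟩)
  · exact MonoidHom.surjective_of_map_eq_ofAdd_one _ (normalizedHom_genD k ⟨0, ht⟩)
  · refine MonoidHom.surjective_of_map_eq_ofAdd_one _ (g := genF ⟨0, hk0.trans_le hk⟩) ?_
    simp [normalizedHom_genF, hk0]

theorem range_normalizedHom_le (h : r + s + t + k = 0) :
    (normalizedHom r s t m n k).range ≤
      (AddMonoidHom.toMultiplicative doubleZMod).range := by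
  refine CoprodI.lift_range_le _ _ fun i ↦ ?_
  rcases i with i | j | i | l | q
  · exact absurd i.2 (by omega)
  · exact absurd j.2 (by omega)
  · exact absurd i.2 (by omega)
  · rintro _ ⟨x, rfl⟩
    have hl : ¬ (l : ℕ) < k := by omega
    refine ⟨x.toAdd.1, ?_⟩
    simp only [normalizedFactor, hl, if_false, AddMonoidHom.zero_comp, add_zero]
    rfl
  · exact le_rfl

theorem not_surjective_normalizedHom (h : r + s + t + k = 0) :
    ¬ Function.Surjective (normalizedHom r s t m n k) := by
  intro hsurj
  obtain ⟨y, hy⟩ := range_normalizedHom_le k h (hsurj (Multiplicative.ofAdd 1))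
  revert y
  decide

end normalizedHom

/-- Existence part of the counting argument in Theorem 1.1: for each `k ≤ m` the
normalized assignments define a group homomorphism `λ_k : G → ℤ/4` which is injective on
each finite cyclic subgroup `⟨b_j⟩`, `⟨d_k⟩`, `⟨e_l⟩`, `⟨g_q⟩`, and `λ_k` is surjective
if and only if `r + s + t + k > 0`. -/
theorem normalized_exists {r s t m n : ℕ} (k : ℕ) (hk : k ≤ m) :
    ∃ lam : OrbGroup r s t m n →* Multiplicative (ZMod 4),
      IsNormalized k lam ∧ InjOnTorsion lam ∧
      (Function.Surjective lam ↔ 0 < r + s + t + k) := by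
  refine ⟨normalizedHom r s t m n k, ⟨normalizedHom_genA k, normalizedHom_genB k,
    normalizedHom_genC k, normalizedHom_genD k, normalizedHom_genE k, fun l ↦ ?_,
    normalizedHom_genG k⟩, injOnTorsion_normalizedHom k,
    fun hsurj ↦ Nat.pos_of_ne_zero fun h ↦ not_surjective_normalizedHom k h hsurj,
    surjective_normalizedHom k hk⟩
  rw [normalizedHom_genF]
  exact ⟨fun h ↦ by rw [if_pos h], fun h ↦ by rw [if_neg h.not_gt]⟩
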